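/- Let g ∈ k[X] be nonzero, let f = X·g, and let P = P(f,g). For every β ∈ k, the element u − β·c is normal in P, i.e. (u − β·c)·P = P·(u − β·c), and the quotient of P by the two-sided ideal generated by u − β·c is isomorphic as a k-algebra to R_f, via the map induced by a ↦ a, c ↦ c, d ↦ a + β·c. -/
import Mathlib


open Polynomial

noncomputable section

/-- Defining relations of `P(f,g)`: with `a = ι 0`, `c = ι 1`, `d = ι 2`,
`a·c = c·a + f(c)`, `d·c = c·d + f(c)`, `d·a = (a − g(c))·d + g(c)·a`. -/
inductive PRel (k : Type) [Field k] (f g : k[X]) :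
    FreeAlgebra k (Fin 3) → FreeAlgebra k (Fin 3) → Prop
  | ac : PRel k f g (FreeAlgebra.ι k 0 * FreeAlgebra.ι k 1)
      (FreeAlgebra.ι k 1 * FreeAlgebra.ι k 0 + aeval (FreeAlgebra.ι k 1) f)
  | dc : PRel k f g (FreeAlgebra.ι k 2 * FreeAlgebra.ι k 1)
      (FreeAlgebra.ι k 1 * FreeAlgebra.ι k 2 + aeval (FreeAlgebra.ι k 1) f)
  | da : PRel k f g (FreeAlgebra.ι k 2 * FreeAlgebra.ι k 0)
      ((FreeAlgebra.ι k 0 - aeval (FreeAlgebra.ι k 1) g) * FreeAlgebra.ι k 2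
        + aeval (FreeAlgebra.ι k 1) g * FreeAlgebra.ι k 0)

/-- The algebra `P(f,g)`. -/
abbrev PAlg (k : Type) [Field k] (f g : k[X]) := RingQuot (PRel k f g)

/-- The generator `a` of `P(f,g)`. -/
def Pa (k : Type) [Field k] (f g : k[X]) : PAlg k f g :=
  RingQuot.mkAlgHom k (PRel k f g) (FreeAlgebra.ι k 0)

/-- The generator `c` of `P(f,g)`. -/
def Pc (k : Type) [Field k] (f g : k[X]) : PAlg k f g :=
  RingQuot.mkAlgHom k (PRel k f g) (FreeAlgebra.ι k 1)

/-- The generator `d` of `P(f,g)`. -/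
def Pd (k : Type) [Field k] (f g : k[X]) : PAlg k f g :=
  RingQuot.mkAlgHom k (PRel k f g) (FreeAlgebra.ι k 2)

/-- The element `u = d - a` of `P(f,g)`. -/
def Pu (k : Type) [Field k] (f g : k[X]) : PAlg k f g := Pd k f g - Pa k f g

/-- Defining relation of the differential operator ring `R_f`: with `a = ι 0`, `c = ι 1`,
`a·c = c·a + f(c)`. -/
inductive RfRel (k : Type) [Field k] (f : k[X]) :
    FreeAlgebra k (Fin 2) → FreeAlgebra k (Fin 2) → Prop
  | ac : RfRel k f (FreeAlgebra.ι k 0 * FreeAlgebra.ι k 1)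
      (FreeAlgebra.ι k 1 * FreeAlgebra.ι k 0 + aeval (FreeAlgebra.ι k 1) f)

/-- The differential operator ring `R_f`. -/
abbrev RfAlg (k : Type) [Field k] (f : k[X]) := RingQuot (RfRel k f)

/-- The generator `a` of `R_f`. -/
def Ra (k : Type) [Field k] (f : k[X]) : RfAlg k f :=
  RingQuot.mkAlgHom k (RfRel k f) (FreeAlgebra.ι k 0)

/-- The generator `c` of `R_f`. -/
def Rc (k : Type) [Field k] (f : k[X]) : RfAlg k f :=
  RingQuot.mkAlgHom k (RfRel k f) (FreeAlgebra.ι k 1)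

/-- The relation identifying `u - β·c` with `0`; quotienting `P(f,g)` by it realizes
the quotient by the two-sided ideal generated by `u - β·c`. -/
inductive UBCRel (k : Type) [Field k] (f g : k[X]) (β : k) : PAlg k f g → PAlg k f g → Prop
  | ubc : UBCRel k f g β (Pu k f g - algebraMap k (PAlg k f g) β * Pc k f g) 0


namespace Stmt10Aux

theorem commute_aeval {k A : Type} [Field k] [Ring A] [Algebra k A] {x y : A}
    (h : Commute x y) (p : k[X]) : Commute x (aeval y p) := by
  induction p using Polynomial.induction_on with
  | C a => simpa [aeval_C] using Algebra.commute_algebraMap_right a x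
  | add p q hp hq => simpa [map_add] using hp.add_right hq
  | monomial n a _ =>
      rw [map_mul, map_pow, aeval_C, aeval_X]
      exact (Algebra.commute_algebraMap_right a x).mul_right (h.pow_right (n + 1))

variable (k : Type) [Field k] (f g : k[X]) (β : k)

theorem rel_ac : Pa k f g * Pc k f g = Pc k f g * Pa k f g + aeval (Pc k f g) f := by
  have h := RingQuot.mkAlgHom_rel k (PRel.ac (k := k) (f := f) (g := g))
  simp only [map_mul, map_add] at h
  rw [← Polynomial.aeval_algHom_apply] at h
  exact h

theorem rel_dc : Pd k f g * Pc k f g = Pc k f g * Pd k f g + aeval (Pc k f g) f := by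
  have h := RingQuot.mkAlgHom_rel k (PRel.dc (k := k) (f := f) (g := g))
  simp only [map_mul, map_add] at h
  rw [← Polynomial.aeval_algHom_apply] at h
  exact h

theorem rel_da : Pd k f g * Pa k f g =
    (Pa k f g - aeval (Pc k f g) g) * Pd k f g + aeval (Pc k f g) g * Pa k f g := by
  have h := RingQuot.mkAlgHom_rel k (PRel.da (k := k) (f := f) (g := g))
  simp only [map_mul, map_add, map_sub] at h
  rw [← Polynomial.aeval_algHom_apply] at h
  exact h

theorem uc : Pu k f g * Pc k f g = Pc k f g * Pu k f g := by
  simp only [Pu, sub_mul, mul_sub, rel_dc k f g, rel_ac k f g]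
  abel

theorem ua : Pu k f g * Pa k f g = (Pa k f g - aeval (Pc k f g) g) * Pu k f g := by
  simp only [Pu, sub_mul, mul_sub, rel_da k f g]
  abel

theorem ud : Pu k f g * Pd k f g = (Pd k f g - aeval (Pc k f g) g) * Pu k f g := by
  simp only [Pu, sub_mul, mul_sub, rel_da k f g]
  abel

/-- The element `w = u - β c`. -/
def Pw : PAlg k f g := Pu k f g - β • Pc k f g

theorem wc : Pw k f g β * Pc k f g = Pc k f g * Pw k f g β := by
  simp only [Pw, sub_mul, mul_sub, smul_mul_assoc, mul_smul_comm, uc k f g]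

theorem w_comm_aeval (p : k[X]) : Commute (Pw k f g β) (aeval (Pc k f g) p) :=
  commute_aeval (wc k f g β) p

theorem hca : Pc k f g * Pa k f g = Pa k f g * Pc k f g - aeval (Pc k f g) f := by
  rw [rel_ac k f g]; abel

theorem hcd : Pc k f g * Pd k f g = Pd k f g * Pc k f g - aeval (Pc k f g) f := by
  rw [rel_dc k f g]; abel

theorem hfgc (hf : f = X * g) :
    aeval (Pc k f g) f = aeval (Pc k f g) g * Pc k f g := by
  rw [hf, mul_comm, map_mul, aeval_X]

theorem wa (hf : f = X * g) :
    Pw k f g β * Pa k f g = (Pa k f g - aeval (Pc k f g) g) * Pw k f g β := by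
  simp only [Pw, sub_mul, mul_sub, smul_mul_assoc, mul_smul_comm, smul_sub,
    ua k f g, hca k f g, hfgc k f g hf]

theorem wd (hf : f = X * g) :
    Pw k f g β * Pd k f g = (Pd k f g - aeval (Pc k f g) g) * Pw k f g β := by
  simp only [Pw, sub_mul, mul_sub, smul_mul_assoc, mul_smul_comm, smul_sub,
    ud k f g, hcd k f g, hfgc k f g hf]

theorem aw (hf : f = X * g) :
    Pa k f g * Pw k f g β = Pw k f g β * (Pa k f g + aeval (Pc k f g) g) := by
  rw [mul_add, wa k f g β hf, (w_comm_aeval k f g β g).eq, sub_mul]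
  abel

theorem dw (hf : f = X * g) :
    Pd k f g * Pw k f g β = Pw k f g β * (Pd k f g + aeval (Pc k f g) g) := by
  rw [mul_add, wd k f g β hf, (w_comm_aeval k f g β g).eq, sub_mul]
  abel

theorem key_left (hf : f = X * g) (x : PAlg k f g) :
    ∃ y, Pw k f g β * x = y * Pw k f g β := by
  obtain ⟨z, rfl⟩ := RingQuot.mkAlgHom_surjective k (PRel k f g) x
  induction z using FreeAlgebra.induction with
  | grade0 r =>
      exact ⟨algebraMap k _ r, by
        rw [AlgHom.commutes]
        exact (Algebra.commute_algebraMap_right r (Pw k f g β)).eq⟩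
  | grade1 i =>
      fin_cases i
      · exact ⟨Pa k f g - aeval (Pc k f g) g, wa k f g β hf⟩
      · exact ⟨Pc k f g, wc k f g β⟩
      · exact ⟨Pd k f g - aeval (Pc k f g) g, wd k f g β hf⟩
  | mul p q hp hq =>
      obtain ⟨y₁, h₁⟩ := hp
      obtain ⟨y₂, h₂⟩ := hq
      exact ⟨y₁ * y₂, by rw [map_mul, ← mul_assoc, h₁, mul_assoc, h₂, ← mul_assoc]⟩
  | add p q hp hq =>
      obtain ⟨y₁, h₁⟩ := hp
      obtain ⟨y₂, h₂⟩ := hq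
      exact ⟨y₁ + y₂, by rw [map_add, mul_add, h₁, h₂, add_mul]⟩

theorem key_right (hf : f = X * g) (x : PAlg k f g) :
    ∃ y, x * Pw k f g β = Pw k f g β * y := by
  obtain ⟨z, rfl⟩ := RingQuot.mkAlgHom_surjective k (PRel k f g) x
  induction z using FreeAlgebra.induction with
  | grade0 r =>
      exact ⟨algebraMap k _ r, by
        rw [AlgHom.commutes]
        exact (Algebra.commute_algebraMap_left r (Pw k f g β)).eq⟩
  | grade1 i =>
      fin_cases i
      · exact ⟨Pa k f g + aeval (Pc k f g) g, aw k f g β hf⟩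
      · exact ⟨Pc k f g, (wc k f g β).symm⟩
      · exact ⟨Pd k f g + aeval (Pc k f g) g, dw k f g β hf⟩
  | mul p q hp hq =>
      obtain ⟨y₁, h₁⟩ := hp
      obtain ⟨y₂, h₂⟩ := hq
      exact ⟨y₁ * y₂, by rw [map_mul, mul_assoc, h₂, ← mul_assoc, h₁, mul_assoc]⟩
  | add p q hp hq =>
      obtain ⟨y₁, h₁⟩ := hp
      obtain ⟨y₂, h₂⟩ := hq
      exact ⟨y₁ + y₂, by rw [map_add, add_mul, h₁, h₂, mul_add]⟩

/-- Images of the generators of `P(f,g)` in `R_f`. -/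
def phiF : Fin 3 → RfAlg k f
  | 0 => Ra k f
  | 1 => Rc k f
  | 2 => Ra k f + algebraMap k (RfAlg k f) β * Rc k f

theorem relR : Ra k f * Rc k f = Rc k f * Ra k f + aeval (Rc k f) f := by
  have h := RingQuot.mkAlgHom_rel k (RfRel.ac (k := k) (f := f))
  simp only [map_mul, map_add] at h
  rw [← Polynomial.aeval_algHom_apply] at h
  exact h

theorem hfgcR (hf : f = X * g) :
    aeval (Rc k f) f = aeval (Rc k f) g * Rc k f := by
  rw [hf, mul_comm, map_mul, aeval_X]

theorem phi0_rel (hf : f = X * g) : ∀ ⦃x y⦄, PRel k f g x y →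
    FreeAlgebra.lift k (phiF k f β) x = FreeAlgebra.lift k (phiF k f β) y := by
  intro x y h
  cases h with
  | ac =>
      simp only [map_mul, map_add, FreeAlgebra.lift_ι_apply,
        ← Polynomial.aeval_algHom_apply]
      show Ra k f * Rc k f = Rc k f * Ra k f + aeval (Rc k f) f
      exact relR k f
  | dc =>
      simp only [map_mul, map_add, FreeAlgebra.lift_ι_apply,
        ← Polynomial.aeval_algHom_apply]
      show (Ra k f + algebraMap k (RfAlg k f) β * Rc k f) * Rc k f =
        Rc k f * (Ra k f + algebraMap k (RfAlg k f) β * Rc k f) + aeval (Rc k f) f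
      simp only [← Algebra.smul_def, add_mul, mul_add, smul_mul_assoc, mul_smul_comm,
        relR k f]
      abel
  | da =>
      simp only [map_mul, map_add, map_sub, FreeAlgebra.lift_ι_apply,
        ← Polynomial.aeval_algHom_apply]
      show (Ra k f + algebraMap k (RfAlg k f) β * Rc k f) * Ra k f =
        (Ra k f - aeval (Rc k f) g) * (Ra k f + algebraMap k (RfAlg k f) β * Rc k f) +
          aeval (Rc k f) g * Ra k f
      simp only [← Algebra.smul_def, add_mul, mul_add, sub_mul, smul_mul_assoc,
        mul_smul_comm, smul_add, smul_sub, relR k f, hfgcR k f g hf]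
      abel

/-- The algebra map `P(f,g) → R_f`. -/
def phi (hf : f = X * g) : PAlg k f g →ₐ[k] RfAlg k f :=
  RingQuot.liftAlgHom k ⟨FreeAlgebra.lift k (phiF k f β), phi0_rel k f g β hf⟩

theorem phi_a (hf : f = X * g) : phi k f g β hf (Pa k f g) = Ra k f := by
  rw [Pa, phi, RingQuot.liftAlgHom_mkAlgHom_apply, FreeAlgebra.lift_ι_apply]; rfl

theorem phi_c (hf : f = X * g) : phi k f g β hf (Pc k f g) = Rc k f := by
  rw [Pc, phi, RingQuot.liftAlgHom_mkAlgHom_apply, FreeAlgebra.lift_ι_apply]; rfl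

theorem phi_d (hf : f = X * g) :
    phi k f g β hf (Pd k f g) = Ra k f + algebraMap k (RfAlg k f) β * Rc k f := by
  rw [Pd, phi, RingQuot.liftAlgHom_mkAlgHom_apply, FreeAlgebra.lift_ι_apply]; rfl

theorem phi_rel2 (hf : f = X * g) : ∀ ⦃x y⦄, UBCRel k f g β x y →
    phi k f g β hf x = phi k f g β hf y := by
  intro x y h
  cases h with
  | ubc =>
      simp only [map_sub, map_mul, map_zero, Pu, AlgHom.commutes,
        phi_a k f g β hf, phi_c k f g β hf, phi_d k f g β hf]
      abel

/-- The algebra map `P(f,g)/(u-βc) → R_f`. -/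
def Phi (hf : f = X * g) : RingQuot (UBCRel k f g β) →ₐ[k] RfAlg k f :=
  RingQuot.liftAlgHom k ⟨phi k f g β hf, phi_rel2 k f g β hf⟩

/-- Images of the generators of `R_f` in `P(f,g)/(u-βc)`. -/
def psiF : Fin 2 → RingQuot (UBCRel k f g β)
  | 0 => RingQuot.mkAlgHom k (UBCRel k f g β) (Pa k f g)
  | 1 => RingQuot.mkAlgHom k (UBCRel k f g β) (Pc k f g)

theorem psi0_rel : ∀ ⦃x y⦄, RfRel k f x y →
    FreeAlgebra.lift k (psiF k f g β) x = FreeAlgebra.lift k (psiF k f g β) y := by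
  intro x y h
  cases h with
  | ac =>
      simp only [map_mul, map_add, FreeAlgebra.lift_ι_apply,
        ← Polynomial.aeval_algHom_apply]
      show RingQuot.mkAlgHom k (UBCRel k f g β) (Pa k f g) *
          RingQuot.mkAlgHom k (UBCRel k f g β) (Pc k f g) = _
      rw [← map_mul, rel_ac k f g, map_add, map_mul, ← Polynomial.aeval_algHom_apply]
      rfl

/-- The algebra map `R_f → P(f,g)/(u-βc)`. -/
def Psi : RfAlg k f →ₐ[k] RingQuot (UBCRel k f g β) :=
  RingQuot.liftAlgHom k ⟨FreeAlgebra.lift k (psiF k f g β), psi0_rel k f g β⟩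

theorem Psi_a : Psi k f g β (Ra k f) = RingQuot.mkAlgHom k (UBCRel k f g β) (Pa k f g) := by
  rw [Ra, Psi, RingQuot.liftAlgHom_mkAlgHom_apply, FreeAlgebra.lift_ι_apply]; rfl

theorem Psi_c : Psi k f g β (Rc k f) = RingQuot.mkAlgHom k (UBCRel k f g β) (Pc k f g) := by
  rw [Rc, Psi, RingQuot.liftAlgHom_mkAlgHom_apply, FreeAlgebra.lift_ι_apply]; rfl

theorem Phi_mk (hf : f = X * g) (x : PAlg k f g) :
    Phi k f g β hf (RingQuot.mkAlgHom k (UBCRel k f g β) x) = phi k f g β hf x := by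
  rw [Phi, RingQuot.liftAlgHom_mkAlgHom_apply]

theorem quot_d : RingQuot.mkAlgHom k (UBCRel k f g β) (Pd k f g) =
    RingQuot.mkAlgHom k (UBCRel k f g β) (Pa k f g) +
      algebraMap k (RingQuot (UBCRel k f g β)) β *
        RingQuot.mkAlgHom k (UBCRel k f g β) (Pc k f g) := by
  have h := RingQuot.mkAlgHom_rel k (UBCRel.ubc (k := k) (f := f) (g := g) (β := β))
  simp only [map_sub, map_mul, map_zero, Pu, AlgHom.commutes, sub_eq_zero] at h
  rw [sub_eq_iff_eq_add'] at h
  rw [h]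

end Stmt10Aux

theorem stmt10 (k : Type) [Field k] [IsAlgClosed k] [CharZero k] (g : k[X]) (hg : g ≠ 0)
    (f : k[X]) (hf : f = X * g) (β : k) :
    Set.range (fun x : PAlg k f g =>
        (Pu k f g - algebraMap k (PAlg k f g) β * Pc k f g) * x) =
      Set.range (fun x : PAlg k f g =>
        x * (Pu k f g - algebraMap k (PAlg k f g) β * Pc k f g)) ∧
    ∃ e : RingQuot (UBCRel k f g β) ≃ₐ[k] RfAlg k f,
      e (RingQuot.mkAlgHom k (UBCRel k f g β) (Pa k f g)) = Ra k f ∧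
      e (RingQuot.mkAlgHom k (UBCRel k f g β) (Pc k f g)) = Rc k f ∧
      e (RingQuot.mkAlgHom k (UBCRel k f g β) (Pd k f g)) =
        Ra k f + algebraMap k (RfAlg k f) β * Rc k f := by
  classical
  have hw : (Pu k f g - algebraMap k (PAlg k f g) β * Pc k f g) = Stmt10Aux.Pw k f g β := by
    rw [Stmt10Aux.Pw, Algebra.smul_def]
  constructor
  · ext t
    simp only [Set.mem_range, hw]
    constructor
    · rintro ⟨x, rfl⟩
      obtain ⟨y, hy⟩ := Stmt10Aux.key_left k f g β hf x
      exact ⟨y, hy.symm⟩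
    · rintro ⟨x, rfl⟩
      obtain ⟨y, hy⟩ := Stmt10Aux.key_right k f g β hf x
      exact ⟨y, hy.symm⟩
  · refine ⟨AlgEquiv.ofAlgHom (Stmt10Aux.Phi k f g β hf) (Stmt10Aux.Psi k f g β) ?_ ?_,
      ?_, ?_, ?_⟩
    · ext i
      fin_cases i
      · show Stmt10Aux.Phi k f g β hf (Stmt10Aux.Psi k f g β
          (RingQuot.mkAlgHom k (RfRel k f) (FreeAlgebra.ι k 0))) = _
        rw [show RingQuot.mkAlgHom k (RfRel k f) (FreeAlgebra.ι k 0) = Ra k f from rfl,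
          Stmt10Aux.Psi_a, Stmt10Aux.Phi_mk, Stmt10Aux.phi_a]
        rfl
      · show Stmt10Aux.Phi k f g β hf (Stmt10Aux.Psi k f g β
          (RingQuot.mkAlgHom k (RfRel k f) (FreeAlgebra.ι k 1))) = _
        rw [show RingQuot.mkAlgHom k (RfRel k f) (FreeAlgebra.ι k 1) = Rc k f from rfl,
          Stmt10Aux.Psi_c, Stmt10Aux.Phi_mk, Stmt10Aux.phi_c]
        rfl
    · ext i
      fin_cases i
      · show Stmt10Aux.Psi k f g β (Stmt10Aux.Phi k f g β hf
          (RingQuot.mkAlgHom k (UBCRel k f g β)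
            (RingQuot.mkAlgHom k (PRel k f g) (FreeAlgebra.ι k 0)))) = _
        rw [show RingQuot.mkAlgHom k (PRel k f g) (FreeAlgebra.ι k 0) = Pa k f g from rfl,
          Stmt10Aux.Phi_mk, Stmt10Aux.phi_a, Stmt10Aux.Psi_a]
        rfl
      · show Stmt10Aux.Psi k f g β (Stmt10Aux.Phi k f g β hf
          (RingQuot.mkAlgHom k (UBCRel k f g β)
            (RingQuot.mkAlgHom k (PRel k f g) (FreeAlgebra.ι k 1)))) = _
        rw [show RingQuot.mkAlgHom k (PRel k f g) (FreeAlgebra.ι k 1) = Pc k f g from rfl,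
          Stmt10Aux.Phi_mk, Stmt10Aux.phi_c, Stmt10Aux.Psi_c]
        rfl
      · show Stmt10Aux.Psi k f g β (Stmt10Aux.Phi k f g β hf
          (RingQuot.mkAlgHom k (UBCRel k f g β)
            (RingQuot.mkAlgHom k (PRel k f g) (FreeAlgebra.ι k 2)))) = _
        rw [show RingQuot.mkAlgHom k (PRel k f g) (FreeAlgebra.ι k 2) = Pd k f g from rfl,
          Stmt10Aux.Phi_mk, Stmt10Aux.phi_d, map_add, map_mul, AlgHom.commutes,
          Stmt10Aux.Psi_a, Stmt10Aux.Psi_c, ← Stmt10Aux.quot_d]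
        rfl
    · show Stmt10Aux.Phi k f g β hf (RingQuot.mkAlgHom k (UBCRel k f g β) (Pa k f g)) = _
      rw [Stmt10Aux.Phi_mk, Stmt10Aux.phi_a]
    · show Stmt10Aux.Phi k f g β hf (RingQuot.mkAlgHom k (UBCRel k f g β) (Pc k f g)) = _
      rw [Stmt10Aux.Phi_mk, Stmt10Aux.phi_c]
    · show Stmt10Aux.Phi k f g β hf (RingQuot.mkAlgHom k (UBCRel k f g β) (Pd k f g)) = _
      rw [Stmt10Aux.Phi_mk, Stmt10Aux.phi_d]
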